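/- arXiv:2410.08750 — 11 statements merged into one kernel-verified Lean document; each statement's English description precedes it below -/
import Mathlib

section
/- Let a, b ∈ {-1, 0, 1} be real numbers. The cubic form x₁³ + 3a·x₁²x₂ + 3b·x₁x₂² + x₂³ is strictly positive for all (x₁, x₂) with x₁ ≥ 0, x₂ ≥ 0, (x₁, x₂) ≠ (0,0) if and only if a + b ≥ 0. -/
/-!
On the closed quadrant the form is increasing in both `a` and `b`, and on the line `b = -a`
it is the combination `(1 + a) (x³ + y³) - a ((x - y)³ + 2y³)` of two forms positive there;
so it is positive whenever `a, b ≥ -1` and `a + b ≥ 0`. Conversely its value `2 + 3(a + b)`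
at `(1, 1)` forces `a + b > -1`, hence `a + b ≥ 0` for `a, b ∈ {-1, 0, 1}`.
-/

def cubicForm (a b x y : ℝ) : ℝ := x^3 + 3*a*x^2*y + 3*b*x*y^2 + y^3

lemma cubicForm_comm (a b x y : ℝ) : cubicForm a b x y = cubicForm b a y x := by
  unfold cubicForm; ring

lemma cubicForm_mono {a b a' b' x y : ℝ} (ha : a ≤ a') (hb : b ≤ b')
    (hx : 0 ≤ x) (hy : 0 ≤ y) : cubicForm a b x y ≤ cubicForm a' b' x y := by
  unfold cubicForm
  have := mul_le_mul_of_nonneg_right ha (by positivity : (0:ℝ) ≤ x^2*y)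
  have := mul_le_mul_of_nonneg_right hb (by positivity : (0:ℝ) ≤ x*y^2)
  nlinarith

lemma cubicForm_one_one (a b : ℝ) : cubicForm a b 1 1 = 2 + 3 * (a + b) := by
  unfold cubicForm; ring

lemma cubicForm_zero_zero_pos {x y : ℝ} (hx : 0 ≤ x) (hy : 0 ≤ y) (hxy : 0 < x ∨ 0 < y) :
    0 < cubicForm 0 0 x y := by
  have hform : cubicForm 0 0 x y = x^3 + y^3 := by unfold cubicForm; ring
  rw [hform]
  rcases hxy with h | h <;> positivity

lemma cubicForm_neg_one_one_pos {x y : ℝ} (hx : 0 ≤ x) (hy : 0 ≤ y) (hxy : 0 < x ∨ 0 < y) :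
    0 < cubicForm (-1) 1 x y := by
  rcases le_or_gt x y with hle | hlt
  · have hdiff : cubicForm (-1) 1 x y = cubicForm 0 0 x y + 3*x*y*(y - x) := by
      unfold cubicForm; ring
    have : 0 ≤ 3*x*y*(y - x) := by have := sub_nonneg.2 hle; positivity
    rw [hdiff]
    linarith [cubicForm_zero_zero_pos hx hy hxy]
  · have hcube : cubicForm (-1) 1 x y = (x - y)^3 + 2*y^3 := by unfold cubicForm; ring
    have := sub_pos.2 hlt
    rw [hcube]
    positivity

lemma cubicForm_pos_of_le {a b x y : ℝ} (ha : -1 ≤ a) (hab : a ≤ b) (hsum : 0 ≤ a + b)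
    (hx : 0 ≤ x) (hy : 0 ≤ y) (hxy : 0 < x ∨ 0 < y) : 0 < cubicForm a b x y := by
  rcases le_or_gt 0 a with ha0 | ha0
  · exact (cubicForm_zero_zero_pos hx hy hxy).trans_le
      (cubicForm_mono ha0 (ha0.trans hab) hx hy)
  · have hmix : cubicForm a (-a) x y = (1 + a) * cubicForm 0 0 x y + -a * cubicForm (-1) 1 x y := by
      unfold cubicForm; ring
    have h0 := cubicForm_zero_zero_pos hx hy hxy
    have h1 := cubicForm_neg_one_one_pos hx hy hxy
    have : 0 < cubicForm a (-a) x y := by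
      rw [hmix]
      have : 0 ≤ 1 + a := by linarith
      have : 0 < -a := by linarith
      positivity
    exact this.trans_le (cubicForm_mono le_rfl (by linarith) hx hy)

theorem cubicForm_pos {a b x y : ℝ} (ha : -1 ≤ a) (hb : -1 ≤ b) (hsum : 0 ≤ a + b)
    (hx : 0 ≤ x) (hy : 0 ≤ y) (hxy : 0 < x ∨ 0 < y) : 0 < cubicForm a b x y := by
  rcases le_total a b with hab | hba
  · exact cubicForm_pos_of_le ha hab hsum hx hy hxy
  · rw [cubicForm_comm]
    exact cubicForm_pos_of_le hb hba (by linarith) hy hx hxy.symm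

lemma pos_or_pos_of_ne_zero {x y : ℝ} (hx : 0 ≤ x) (hy : 0 ≤ y) (hxy : (x, y) ≠ (0, 0)) :
    0 < x ∨ 0 < y := by
  by_contra! h
  exact hxy (Prod.ext (le_antisymm h.1 hx) (le_antisymm h.2 hy))

lemma add_nonneg_of_mem_of_neg_one_lt {a b : ℝ} (ha : a ∈ ({-1, 0, 1} : Set ℝ))
    (hb : b ∈ ({-1, 0, 1} : Set ℝ)) (h : -1 < a + b) : 0 ≤ a + b := by
  simp only [Set.mem_insert_iff, Set.mem_singleton_iff] at ha hb
  rcases ha with rfl | rfl | rfl <;> rcases hb with rfl | rfl | rfl <;> linarith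

lemma neg_one_le_of_mem {a : ℝ} (ha : a ∈ ({-1, 0, 1} : Set ℝ)) : -1 ≤ a := by
  simp only [Set.mem_insert_iff, Set.mem_singleton_iff] at ha
  rcases ha with rfl | rfl | rfl <;> norm_num

theorem stmt_0 (a b : ℝ) (ha : a ∈ ({-1, 0, 1} : Set ℝ)) (hb : b ∈ ({-1, 0, 1} : Set ℝ)) :
    (∀ x₁ x₂ : ℝ, 0 ≤ x₁ → 0 ≤ x₂ → (x₁, x₂) ≠ (0, 0) →
      0 < x₁^3 + 3*a*x₁^2*x₂ + 3*b*x₁*x₂^2 + x₂^3) ↔ a + b ≥ 0 := by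
  constructor
  · intro h
    have h11 : 0 < cubicForm a b 1 1 := h 1 1 zero_le_one zero_le_one (by simp)
    rw [cubicForm_one_one] at h11
    exact add_nonneg_of_mem_of_neg_one_lt ha hb (by linarith)
  · intro hsum x₁ x₂ hx₁ hx₂ hne
    exact cubicForm_pos (neg_one_le_of_mem ha) (neg_one_le_of_mem hb) hsum hx₁ hx₂
      (pos_or_pos_of_ne_zero hx₁ hx₂ hne)
end

section
/- For all nonnegative reals x₁, x₂, x₃ not all zero, (x₁ + x₂ + x₃)³ > 12·x₁x₂x₃ + 6·x₁²x₂ + 6·x₂²x₃. -/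
theorem stmt_1 (x₁ x₂ x₃ : ℝ) (h1 : 0 ≤ x₁) (h2 : 0 ≤ x₂) (h3 : 0 ≤ x₃)
    (hne : (x₁, x₂, x₃) ≠ (0, 0, 0)) :
    (x₁ + x₂ + x₃)^3 > 12*x₁*x₂*x₃ + 6*x₁^2*x₂ + 6*x₂^2*x₃ := by
  have hs : 0 < x₁ + x₂ + x₃ := by
    rcases h1.lt_or_eq with h | h
    · positivity
    rcases h2.lt_or_eq with h' | h'
    · positivity
    rcases h3.lt_or_eq with h'' | h''
    · positivity
    exact absurd (by rw [← h, ← h', ← h'']) hne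
  nlinarith [mul_nonneg h1 (sq_nonneg (x₁ - x₂)), mul_nonneg h2 (sq_nonneg (x₁ - x₂)),
    mul_nonneg h3 (sq_nonneg (x₁ - x₂)), mul_nonneg h1 (sq_nonneg (x₁ - 2*x₃)),
    mul_nonneg h2 (sq_nonneg (x₁ - 2*x₃)), mul_nonneg h3 (sq_nonneg (x₁ - 2*x₃)),
    mul_nonneg h1 (sq_nonneg (x₂ - 2*x₃)), mul_nonneg h2 (sq_nonneg (x₂ - 2*x₃)),
    mul_nonneg h3 (sq_nonneg (x₂ - 2*x₃)), mul_pos hs (mul_pos hs hs),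
    mul_nonneg (mul_nonneg h1 h2) h3]
end

section
/- For all nonnegative reals x₁, x₂, x₃ not all zero, (x₁ + x₂ + x₃)³ > 12·x₁x₂x₃ + 6·x₁²x₃ + 6·x₂²x₃. -/
theorem stmt_2 (x₁ x₂ x₃ : ℝ) (h1 : 0 ≤ x₁) (h2 : 0 ≤ x₂) (h3 : 0 ≤ x₃)
    (hne : (x₁, x₂, x₃) ≠ (0, 0, 0)) :
    (x₁ + x₂ + x₃)^3 > 12*x₁*x₂*x₃ + 6*x₁^2*x₃ + 6*x₂^2*x₃ := by
  have hs : 0 < x₁ + x₂ + x₃ := by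
    by_contra hc
    push_neg at hc
    have e1 : x₁ = 0 := le_antisymm (by linarith) h1
    have e2 : x₂ = 0 := le_antisymm (by linarith) h2
    have e3 : x₃ = 0 := le_antisymm (by linarith) h3
    exact hne (by simp [e1, e2, e3])
  rcases lt_or_eq_of_le h3 with h3' | h3'
  · nlinarith [mul_pos h3' (mul_pos hs hs), mul_nonneg h3 (sq_nonneg (x₁ + x₂ - x₃)),
      mul_nonneg (add_nonneg h1 h2) (sq_nonneg (x₁ + x₂ - 2*x₃)),
      mul_nonneg (add_nonneg h1 h2) (sq_nonneg x₃)]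
  · have hu : 0 < x₁ + x₂ := by linarith
    nlinarith [mul_pos hu (mul_pos hu hu), sq_nonneg x₃, mul_nonneg h3 (sq_nonneg (x₁ + x₂ - x₃)),
      mul_nonneg (add_nonneg h1 h2) (sq_nonneg (x₁ + x₂ - 2*x₃)),
      mul_nonneg (add_nonneg h1 h2) (sq_nonneg x₃)]
end

section
/- For all nonnegative reals x₁, x₂, x₃ not all zero, (x₁ + x₂ + x₃)³ > 12·x₁x₂x₃ + 6·x₁²x₃ + 3·x₁²x₂. -/
theorem stmt_3 (x₁ x₂ x₃ : ℝ) (h1 : 0 ≤ x₁) (h2 : 0 ≤ x₂) (h3 : 0 ≤ x₃)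
    (hne : (x₁, x₂, x₃) ≠ (0, 0, 0)) :
    (x₁ + x₂ + x₃)^3 > 12*x₁*x₂*x₃ + 6*x₁^2*x₃ + 3*x₁^2*x₂ := by
  have hs : 0 < x₁ + x₂ + x₃ := by
    rcases lt_or_eq_of_le h1 with h | h
    · linarith
    · rcases lt_or_eq_of_le h2 with h' | h'
      · linarith
      · rcases lt_or_eq_of_le h3 with h'' | h''
        · linarith
        · exact absurd (by simp [← h, ← h', ← h'']) hne
  nlinarith [mul_nonneg h1 (sq_nonneg (x₁ - 2*x₃)), mul_nonneg h2 (sq_nonneg (x₁ - 4*x₂)),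
    mul_nonneg h3 (sq_nonneg (x₁ - 2*x₃)), mul_nonneg h1 (sq_nonneg (4*x₂ - x₃)),
    mul_nonneg h2 (sq_nonneg (2*x₂ - x₃)), mul_nonneg h3 (sq_nonneg (2*x₂ - x₃)),
    mul_nonneg h1 (sq_nonneg (x₂ - x₃)), mul_nonneg (mul_nonneg h1 h2) h3,
    mul_pos hs (mul_pos hs hs)]
end

section
/- The minimum of the function f(x₁, x₂, x₃) = (x₁ + x₂ + x₃)³ - 3x₁²x₂ - 6x₁²x₃ - 12x₁x₂x₃ over the set {(x₁, x₂, x₃) : x₁ + x₂ + x₃ = 1, x₁ ≥ 0, x₂ ≥ 0, x₃ ≥ 0} equals 1/49, attained at (4/7, 1/7, 2/7). -/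
set_option maxHeartbeats 1000000 in
theorem stmt_7 :
    IsLeast {y : ℝ | ∃ x₁ x₂ x₃ : ℝ, 0 ≤ x₁ ∧ 0 ≤ x₂ ∧ 0 ≤ x₃ ∧ x₁ + x₂ + x₃ = 1 ∧
      y = (x₁ + x₂ + x₃)^3 - 3*x₁^2*x₂ - 6*x₁^2*x₃ - 12*x₁*x₂*x₃} (1/49) ∧
    ((4/7 + 1/7 + 2/7 : ℝ)^3 - 3*(4/7:ℝ)^2*(1/7) - 6*(4/7:ℝ)^2*(2/7)
      - 12*(4/7:ℝ)*(1/7)*(2/7) = 1/49) := by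
  refine ⟨⟨⟨4/7, 1/7, 2/7, by norm_num⟩, ?_⟩, by norm_num⟩
  rintro y ⟨a, b, c, ha, hb, hc, hsum, rfl⟩
  nlinarith [mul_nonneg ha (sq_nonneg (c - 2*b)), mul_nonneg hb (sq_nonneg (7*a - 4)),
    mul_nonneg hc (sq_nonneg (7*a - 4)), mul_nonneg ha (sq_nonneg (7*a - 4)),
    mul_nonneg hb (sq_nonneg (a - 4*b)), mul_nonneg hc (sq_nonneg (a - 2*c)),
    mul_nonneg (mul_nonneg ha hb) hc]
end

section
/- Let M be a symmetric 3×3 real matrix with m₁₁ = 1, m₂₂ = 3, m₃₃ = 3, m₂₃ = -3, m₁₂ = (3/2)a and m₁₃ = (3/2)b for a, b ∈ {-1, 0, 1} with a + b ≥ 0. Then M is copositive, i.e., xᵀMx ≥ 0 for all x ∈ ℝ³ with nonnegative entries. -/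
theorem stmt_10 (a b : ℝ) (ha : a ∈ ({-1, 0, 1} : Set ℝ)) (hb : b ∈ ({-1, 0, 1} : Set ℝ))
    (hab : a + b ≥ 0) :
    ∀ x : Fin 3 → ℝ, (∀ i, 0 ≤ x i) →
      0 ≤ dotProduct x (Matrix.mulVec (!![1, (3/2)*a, (3/2)*b; (3/2)*a, 3, -3; (3/2)*b, -3, 3] : Matrix (Fin 3) (Fin 3) ℝ) x) := by
  intro x hx
  have h0 := hx 0
  have h1 := hx 1
  have h2 := hx 2
  simp [dotProduct, Matrix.mulVec, Fin.sum_univ_three,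
    Matrix.cons_val_zero, Matrix.cons_val_one, Matrix.head_cons,
    Matrix.cons_val_two, Matrix.tail_cons, show ((2:Fin 3)) = (2:Fin 3) from rfl]
  rcases ha with rfl | rfl | rfl <;> rcases hb with rfl | rfl | rfl <;>
    nlinarith [sq_nonneg (x 0), sq_nonneg (x 1 - x 2), sq_nonneg (x 0 + (3/2)*(x 1 - x 2)),
      sq_nonneg (x 0 - (3/2)*(x 1 - x 2)), mul_nonneg h0 h1, mul_nonneg h0 h2,
      mul_nonneg h1 h2]
end

section
/- Let M = [[1, (3/2)a, (3/2)b], [(3/2)a, 3, 0], [(3/2)b, 0, 3]] with a, b ∈ {-1, 0, 1} and a + b ≥ -1. Then M is strictly copositive: xᵀMx > 0 for all nonzero x ∈ ℝ³ with nonnegative entries. -/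
open Matrix

/-! Along each nonnegative ray the quadratic form is affine and nondecreasing in `(a, b)`, so it
suffices to treat `(a, b) = (-s, -t)` with `s, t ≥ 0` and `s + t ≤ 1`.  There the form is a convex
combination of its values at the corners `(-1, 0)`, `(0, -1)`, `(0, 0)`, and at each corner the
matrix is positive definite (e.g. `x₀² - 3x₀x₁ + 3x₁² = (x₀ - 3x₁/2)² + 3x₁²/4`). -/

noncomputable def arrowhead (a b : ℝ) : Matrix (Fin 3) (Fin 3) ℝ :=
  !![1, (3/2)*a, (3/2)*b; (3/2)*a, 3, 0; (3/2)*b, 0, 3]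

namespace arrowhead

lemma dotProduct_mulVec (a b : ℝ) (x : Fin 3 → ℝ) :
    x ⬝ᵥ (arrowhead a b *ᵥ x)
      = x 0 ^ 2 + 3 * x 1 ^ 2 + 3 * x 2 ^ 2 + 3 * a * (x 0 * x 1) + 3 * b * (x 0 * x 2) := by
  simp only [dotProduct, mulVec, arrowhead, of_apply, cons_val', cons_val_fin_one,
    Fin.sum_univ_three, cons_val_zero, cons_val_one, cons_val, one_mul, zero_mul, add_zero]
  ring

lemma quadForm_mono {a a' b b' : ℝ} (ha : a ≤ a') (hb : b ≤ b') {x : Fin 3 → ℝ} (hx : 0 ≤ x) :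
    x ⬝ᵥ (arrowhead a b *ᵥ x) ≤ x ⬝ᵥ (arrowhead a' b' *ᵥ x) := by
  have h01 : 0 ≤ x 0 * x 1 := mul_nonneg (hx 0) (hx 1)
  have h02 : 0 ≤ x 0 * x 2 := mul_nonneg (hx 0) (hx 2)
  rw [dotProduct_mulVec, dotProduct_mulVec]
  nlinarith

-- `1/10` is below `2 - √13/2`, the smallest eigenvalue of the two nondiagonal corner matrices.
lemma dotProduct_self_div_ten_le_quadForm_neg {s t : ℝ} (hs : 0 ≤ s) (ht : 0 ≤ t)
    (hst : s + t ≤ 1) (x : Fin 3 → ℝ) :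
    x ⬝ᵥ x / 10 ≤ x ⬝ᵥ (arrowhead (-s) (-t) *ᵥ x) := by
  have corner₁ : x ⬝ᵥ x / 10 ≤ x ⬝ᵥ (arrowhead (-1) 0 *ᵥ x) := by
    rw [vec3_dotProduct, dotProduct_mulVec]
    nlinarith [sq_nonneg (x 0 - 3 / 2 * x 1), sq_nonneg (x 1), sq_nonneg (x 2)]
  have corner₂ : x ⬝ᵥ x / 10 ≤ x ⬝ᵥ (arrowhead 0 (-1) *ᵥ x) := by
    rw [vec3_dotProduct, dotProduct_mulVec]
    nlinarith [sq_nonneg (x 0 - 3 / 2 * x 2), sq_nonneg (x 1), sq_nonneg (x 2)]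
  have corner₀ : x ⬝ᵥ x / 10 ≤ x ⬝ᵥ (arrowhead 0 0 *ᵥ x) := by
    rw [vec3_dotProduct, dotProduct_mulVec]
    nlinarith [sq_nonneg (x 0), sq_nonneg (x 1), sq_nonneg (x 2)]
  have convex : x ⬝ᵥ (arrowhead (-s) (-t) *ᵥ x) = s * x ⬝ᵥ (arrowhead (-1) 0 *ᵥ x)
      + t * x ⬝ᵥ (arrowhead 0 (-1) *ᵥ x) + (1 - s - t) * x ⬝ᵥ (arrowhead 0 0 *ᵥ x) := by
    simp only [dotProduct_mulVec]
    ring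
  rw [convex]
  nlinarith [mul_le_mul_of_nonneg_left corner₁ hs, mul_le_mul_of_nonneg_left corner₂ ht,
    mul_le_mul_of_nonneg_left corner₀ (by linarith : 0 ≤ 1 - s - t)]

theorem quadForm_pos {a b : ℝ} (ha : -1 ≤ a) (hb : -1 ≤ b) (hab : -1 ≤ a + b)
    {x : Fin 3 → ℝ} (hx : 0 ≤ x) (hx₀ : x ≠ 0) : 0 < x ⬝ᵥ (arrowhead a b *ᵥ x) := by
  have hsum : max 0 (-a) + max 0 (-b) ≤ 1 := by
    simp only [max_def]
    split_ifs <;> linarith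
  have hxx : 0 < x ⬝ᵥ x :=
    lt_of_le_of_ne (dotProduct_self_star_nonneg x) (Ne.symm (dotProduct_self_eq_zero.not.mpr hx₀))
  calc 0 < x ⬝ᵥ x / 10 := by positivity
    _ ≤ x ⬝ᵥ (arrowhead (-max 0 (-a)) (-max 0 (-b)) *ᵥ x) :=
      dotProduct_self_div_ten_le_quadForm_neg (le_max_left _ _) (le_max_left _ _) hsum x
    _ ≤ x ⬝ᵥ (arrowhead a b *ᵥ x) :=
      quadForm_mono (neg_le.mp (le_max_right _ _)) (neg_le.mp (le_max_right _ _)) hx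

end arrowhead

theorem stmt_11 (a b : ℝ) (ha : a ∈ ({-1, 0, 1} : Set ℝ)) (hb : b ∈ ({-1, 0, 1} : Set ℝ))
    (hab : a + b ≥ -1) :
    ∀ x : Fin 3 → ℝ, (∀ i, 0 ≤ x i) → x ≠ 0 →
      0 < dotProduct x (Matrix.mulVec (!![1, (3/2)*a, (3/2)*b; (3/2)*a, 3, 0; (3/2)*b, 0, 3] : Matrix (Fin 3) (Fin 3) ℝ) x) := by
  intro x hx hx₀
  have ha' : -1 ≤ a := by rcases ha with rfl | rfl | rfl <;> norm_num
  have hb' : -1 ≤ b := by rcases hb with rfl | rfl | rfl <;> norm_num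
  exact arrowhead.quadForm_pos ha' hb' hab hx hx₀
end

section
/- Let M = [[1, (3/2)a, (3/2)b], [(3/2)a, 3, 3], [(3/2)b, 3, 3]] with a, b ∈ {-1, 0, 1}. Then M is strictly copositive: xᵀMx > 0 for all nonzero x ∈ ℝ³ with nonnegative entries. -/
/-!
Writing `s = x₁ + x₂`, the quadratic form is `x₀² + 3a x₀x₁ + 3b x₀x₂ + 3s²`. For nonnegative `x`
and `a, b ≥ -1` the cross terms are at least `-3 x₀ s`, and `x₀² - 3x₀s + 3s² = (x₀ - 3s/2)² + 3s²/4`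
vanishes only when `x₀ = s = 0`, i.e. when `x = 0`.
-/

open Matrix

def Matrix.StrictCopositive {n : Type*} [Fintype n] (M : Matrix n n ℝ) : Prop :=
  ∀ x : n → ℝ, (∀ i, 0 ≤ x i) → x ≠ 0 → 0 < x ⬝ᵥ M *ᵥ x

lemma quadForm_fin_three (a b : ℝ) (x : Fin 3 → ℝ) :
    x ⬝ᵥ !![1, (3/2)*a, (3/2)*b; (3/2)*a, 3, 3; (3/2)*b, 3, 3] *ᵥ x =
      x 0 ^ 2 + 3 * a * x 0 * x 1 + 3 * b * x 0 * x 2 + 3 * (x 1 + x 2) ^ 2 := by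
  simp only [dotProduct, mulVec, of_apply, cons_val', cons_val_fin_one, Fin.sum_univ_three,
    cons_val_zero, cons_val_one, cons_val, one_mul]
  ring

lemma sq_sub_three_mul_add_three_sq_pos {u v : ℝ} (huv : u + v ≠ 0) :
    0 < u ^ 2 - 3 * u * v + 3 * v ^ 2 := by
  nlinarith [sq_nonneg (2 * u - 3 * v), sq_nonneg v, pow_pos (abs_pos.mpr huv) 2, sq_abs (u + v)]

lemma sum_pos_of_nonneg_of_ne_zero {ι : Type*} [Fintype ι] {x : ι → ℝ} (hx : ∀ i, 0 ≤ x i)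
    (hne : x ≠ 0) : 0 < ∑ i, x i := by
  obtain ⟨i, hi⟩ := Function.ne_iff.mp hne
  exact Finset.sum_pos' (fun j _ => hx j) ⟨i, Finset.mem_univ i, (hx i).lt_of_ne' hi⟩

theorem strictCopositive_of_neg_one_le {a b : ℝ} (ha : -1 ≤ a) (hb : -1 ≤ b) :
    StrictCopositive
      (!![1, (3/2)*a, (3/2)*b; (3/2)*a, 3, 3; (3/2)*b, 3, 3] : Matrix (Fin 3) (Fin 3) ℝ) := by
  intro x hx hne
  rw [quadForm_fin_three]
  have hcross : -3 * x 0 * (x 1 + x 2) ≤ 3 * a * x 0 * x 1 + 3 * b * x 0 * x 2 := by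
    linarith [mul_nonneg (mul_nonneg (hx 0) (hx 1)) (by linarith : (0:ℝ) ≤ a + 1),
      mul_nonneg (mul_nonneg (hx 0) (hx 2)) (by linarith : (0:ℝ) ≤ b + 1)]
  have hsum : 0 < x 0 + (x 1 + x 2) := by
    simpa only [Fin.sum_univ_three, add_assoc] using sum_pos_of_nonneg_of_ne_zero hx hne
  have hquad := sq_sub_three_mul_add_three_sq_pos (u := x 0) hsum.ne'
  linarith

theorem stmt_12 (a b : ℝ) (ha : a ∈ ({-1, 0, 1} : Set ℝ)) (hb : b ∈ ({-1, 0, 1} : Set ℝ)) :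
    ∀ x : Fin 3 → ℝ, (∀ i, 0 ≤ x i) → x ≠ 0 →
      0 < dotProduct x (Matrix.mulVec (!![1, (3/2)*a, (3/2)*b; (3/2)*a, 3, 3; (3/2)*b, 3, 3] : Matrix (Fin 3) (Fin 3) ℝ) x) := by
  have neg_one_le {c : ℝ} (hc : c ∈ ({-1, 0, 1} : Set ℝ)) : -1 ≤ c := by
    rcases hc with rfl | rfl | rfl <;> norm_num
  exact strictCopositive_of_neg_one_le (neg_one_le ha) (neg_one_le hb)
end

section
/- Let A = (a_ijk) be a third order 3-dimensional symmetric tensor with entries in {-1, 0, 1} satisfying a₁₂₂ = a₁₃₃ = 1 and a₁₂₃ = 1. Then A is strictly copositive if and only if a_iii = 1 and a_iij + a_ijj ≥ 0 for all i ≠ j in {1,2,3}. -/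
/-!
Evaluating at the unit vectors and at `(0, 1, 1)` forces `aᵢᵢᵢ = 1` and `a₂₂₃ + a₂₃₃ > -1`,
hence `a₂₂₃ + a₂₃₃ ≥ 0` since the entries are integers; `a₁₁₂ + 1 ≥ 0` and `a₁₁₃ + 1 ≥ 0` are
automatic. Conversely, by the symmetry `2 ↔ 3` assume `x₃ ≤ x₂`. On the nonnegative octant the
form then decreases when `a₁₁₂, a₁₁₃, a₂₂₃` are lowered to `-1` and `a₂₃₃` to `1` (so that
`a₂₂₃ + a₂₃₃ ≥ 0` is kept), and the resulting form equals
`x₁ (x₁ - 3s/2)² + 3x₁s²/4 + (x₂ - x₃)³ + 2x₃³` with `s = x₂ + x₃`, which is positive.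
-/

lemma neg_one_le_of_mem_neg_one_zero_one {c : ℝ} (hc : c ∈ ({-1, 0, 1} : Set ℝ)) : -1 ≤ c := by
  rcases hc with rfl | rfl | rfl <;> norm_num

lemma eq_one_of_mem_neg_one_zero_one_of_pos {c : ℝ} (hc : c ∈ ({-1, 0, 1} : Set ℝ))
    (hpos : 0 < c) : c = 1 := by
  rcases hc with rfl | rfl | rfl <;> linarith

lemma add_nonneg_of_mem_neg_one_zero_one_of_neg_one_lt {c d : ℝ} (hc : c ∈ ({-1, 0, 1} : Set ℝ))
    (hd : d ∈ ({-1, 0, 1} : Set ℝ)) (h : -1 < c + d) : 0 ≤ c + d := by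
  rcases hc with rfl | rfl | rfl <;> rcases hd with rfl | rfl | rfl <;> linarith

lemma add_add_pos_of_triple_ne_zero {x y z : ℝ} (hx : 0 ≤ x) (hy : 0 ≤ y) (hz : 0 ≤ z)
    (hne : (x, y, z) ≠ (0, 0, 0)) : 0 < x + y + z := by
  by_contra! h
  exact hne (by simp only [Prod.mk.injEq]; refine ⟨?_, ?_, ?_⟩ <;> linarith)

lemma extremal_cubic_pos {x y z : ℝ} (hx : 0 ≤ x) (hz : 0 ≤ z) (hzy : z ≤ y)
    (hs : 0 < x + y + z) :
    0 < x^3 + y^3 + z^3 - 3*x^2*y + 3*x*y^2 - 3*x^2*z + 3*x*z^2 - 3*y^2*z + 3*y*z^2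
      + 6*x*y*z := by
  have key : x^3 + y^3 + z^3 - 3*x^2*y + 3*x*y^2 - 3*x^2*z + 3*x*z^2 - 3*y^2*z + 3*y*z^2
      + 6*x*y*z = x * (x - 3/2*(y+z))^2 + 3/4 * x * (y+z)^2 + (y-z)^3 + 2*z^3 := by ring
  have h₁ : 0 ≤ x * (x - 3/2*(y+z))^2 := by positivity
  have h₂ : 0 ≤ 3/4 * x * (y+z)^2 := by positivity
  have h₃ : 0 ≤ (y-z)^3 := pow_nonneg (sub_nonneg.2 hzy) 3
  rw [key]
  rcases hz.eq_or_lt with rfl | hz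
  · rcases hzy.eq_or_lt with rfl | hy
    · have : 0 < x := by linarith
      have : 0 < x * (x - 3/2*(0+0))^2 := by norm_num; positivity
      linarith
    · have : 0 < (y - 0)^3 := by positivity
      linarith
  · have : 0 < z^3 := by positivity
    linarith

lemma cubic_pos_of_le {b₁₂ b₁₃ b₂₃ b₃₂ x y z : ℝ} (h₁₂ : -1 ≤ b₁₂) (h₁₃ : -1 ≤ b₁₃)
    (h₂₃ : -1 ≤ b₂₃) (hsum : 0 ≤ b₂₃ + b₃₂) (hx : 0 ≤ x) (hy : 0 ≤ y) (hz : 0 ≤ z)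
    (hzy : z ≤ y) (hs : 0 < x + y + z) :
    0 < x^3 + y^3 + z^3 + 3*b₁₂*x^2*y + 3*x*y^2 + 3*b₁₃*x^2*z + 3*x*z^2 + 3*b₂₃*y^2*z
      + 3*b₃₂*y*z^2 + 6*x*y*z := by
  have e₁ : 0 ≤ (b₁₂ + 1) * (x^2 * y) := mul_nonneg (by linarith) (by positivity)
  have e₂ : 0 ≤ (b₁₃ + 1) * (x^2 * z) := mul_nonneg (by linarith) (by positivity)
  have e₃ : 0 ≤ (b₂₃ + 1) * (y * z * (y - z)) :=
    mul_nonneg (by linarith) (mul_nonneg (by positivity) (sub_nonneg.2 hzy))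
  have e₄ : 0 ≤ (b₂₃ + b₃₂) * (y * z^2) := mul_nonneg hsum (by positivity)
  linear_combination extremal_cubic_pos hx hz hzy hs + 3 * e₁ + 3 * e₂ + 3 * e₃ + 3 * e₄

theorem stmt_13 (a₁₁₁ a₂₂₂ a₃₃₃ a₁₁₂ a₁₂₂ a₁₁₃ a₁₃₃ a₂₂₃ a₂₃₃ a₁₂₃ : ℝ)
    (hset : ∀ c ∈ [a₁₁₁, a₂₂₂, a₃₃₃, a₁₁₂, a₁₂₂, a₁₁₃, a₁₃₃, a₂₂₃, a₂₃₃, a₁₂₃],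
      c ∈ ({-1, 0, 1} : Set ℝ))
    (h122 : a₁₂₂ = 1) (h133 : a₁₃₃ = 1) (h123 : a₁₂₃ = 1) :
    (∀ x₁ x₂ x₃ : ℝ, 0 ≤ x₁ → 0 ≤ x₂ → 0 ≤ x₃ → (x₁, x₂, x₃) ≠ (0, 0, 0) →
      0 < a₁₁₁*x₁^3 + a₂₂₂*x₂^3 + a₃₃₃*x₃^3 + 3*a₁₁₂*x₁^2*x₂ + 3*a₁₂₂*x₁*x₂^2
          + 3*a₁₁₃*x₁^2*x₃ + 3*a₁₃₃*x₁*x₃^2 + 3*a₂₂₃*x₂^2*x₃ + 3*a₂₃₃*x₂*x₃^2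
          + 6*a₁₂₃*x₁*x₂*x₃) ↔
    (a₁₁₁ = 1 ∧ a₂₂₂ = 1 ∧ a₃₃₃ = 1 ∧
      a₁₁₂ + a₁₂₂ ≥ 0 ∧ a₁₁₃ + a₁₃₃ ≥ 0 ∧ a₂₂₃ + a₂₃₃ ≥ 0) := by
  simp only [List.forall_mem_cons] at hset
  obtain ⟨m₁₁₁, m₂₂₂, m₃₃₃, m₁₁₂, -, m₁₁₃, -, m₂₂₃, m₂₃₃, -⟩ := hset
  have b₁₁₂ := neg_one_le_of_mem_neg_one_zero_one m₁₁₂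
  have b₁₁₃ := neg_one_le_of_mem_neg_one_zero_one m₁₁₃
  subst h122 h133 h123
  constructor
  · intro h
    have e₁ := eq_one_of_mem_neg_one_zero_one_of_pos m₁₁₁
      (by simpa using h 1 0 0 zero_le_one le_rfl le_rfl (by simp))
    have e₂ := eq_one_of_mem_neg_one_zero_one_of_pos m₂₂₂
      (by simpa using h 0 1 0 le_rfl zero_le_one le_rfl (by simp))
    have e₃ := eq_one_of_mem_neg_one_zero_one_of_pos m₃₃₃
      (by simpa using h 0 0 1 le_rfl le_rfl zero_le_one (by simp))
    have h₀₁₁ := h 0 1 1 le_rfl zero_le_one zero_le_one (by simp)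
    norm_num at h₀₁₁
    exact ⟨e₁, e₂, e₃, by linarith, by linarith,
      add_nonneg_of_mem_neg_one_zero_one_of_neg_one_lt m₂₂₃ m₂₃₃ (by linarith)⟩
  · rintro ⟨rfl, rfl, rfl, -, -, h₂₃⟩ x₁ x₂ x₃ hx₁ hx₂ hx₃ hne
    have hs := add_add_pos_of_triple_ne_zero hx₁ hx₂ hx₃ hne
    rcases le_total x₃ x₂ with h | h
    · linarith [cubic_pos_of_le b₁₁₂ b₁₁₃ (neg_one_le_of_mem_neg_one_zero_one m₂₂₃) h₂₃
        hx₁ hx₂ hx₃ h hs]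
    · linarith [cubic_pos_of_le b₁₁₃ b₁₁₂ (neg_one_le_of_mem_neg_one_zero_one m₂₃₃)
        (add_comm a₂₂₃ a₂₃₃ ▸ h₂₃) hx₁ hx₃ hx₂ h (by linarith)]
end

section
/- Let A = (a_ijk) ∈ S₃,₃ with positive diagonal entries a₁₁₁, a₂₂₂, a₃₃₃ > 0. Suppose a₁₂₂ ≥ (a₁₁₁a₂₂₂²)^(1/3), a₁₃₃ ≥ (a₁₁₁a₃₃₃²)^(1/3), a₁₁₂ ≥ -(a₁₁₁²a₂₂₂)^(1/3), a₁₁₃ ≥ -(a₁₁₁²a₃₃₃)^(1/3), a₂₂₃ ≥ -(a₂₂₂²a₃₃₃)^(1/3), a₂₃₃ ≥ (a₂₂₂a₃₃₃²)^(1/3), and a₁₂₃ ≥ (a₁₁₁a₂₂₂a₃₃₃)^(1/3). Then A is strictly copositive. -/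
lemma cube_key (v u : ℝ) (hv : 0 ≤ v) : 0 ≤ (v - u)^3 + u^3 := by
  nlinarith [mul_nonneg hv (sq_nonneg (2*v - 3*u)), mul_nonneg hv (sq_nonneg u)]

lemma rt_sq (x : ℝ) (hx : 0 ≤ x) : (x^2) ^ ((1:ℝ)/3) = (x ^ ((1:ℝ)/3))^2 := by
  rw [← Real.rpow_natCast (x ^ ((1:ℝ)/3)) 2, ← Real.rpow_mul hx,
    ← Real.rpow_natCast x 2, ← Real.rpow_mul hx]
  norm_num

lemma key (v p q : ℝ) (hv : 0 ≤ v) (hp : 0 ≤ p) (hq : 0 ≤ q)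
    (h : 0 < v ∨ 0 < p ∨ 0 < q) :
    0 < v^3 + p^3 + q^3 - 3*v^2*p + 3*v*p^2 - 3*v^2*q + 3*v*q^2
        - 3*p^2*q + 3*p*q^2 + 6*v*p*q := by
  rcases hq.lt_or_eq with hq' | hq'
  · nlinarith [cube_key v (p+q) hv, cube_key p q hp, pow_pos hq' 3]
  · subst hq'
    rcases hp.lt_or_eq with hp' | hp'
    · nlinarith [cube_key v p hv, pow_pos hp' 3]
    · subst hp'
      have hv' : 0 < v := by
        rcases h with h | h | h
        · exact h
        · exact absurd h (by linarith)
        · exact absurd h (by linarith)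
      nlinarith [pow_pos hv' 3]

set_option maxHeartbeats 1000000 in
theorem stmt_17 (a₁₁₁ a₂₂₂ a₃₃₃ a₁₁₂ a₁₂₂ a₁₁₃ a₁₃₃ a₂₂₃ a₂₃₃ a₁₂₃ : ℝ)
    (h1 : 0 < a₁₁₁) (h2 : 0 < a₂₂₂) (h3 : 0 < a₃₃₃)
    (c1 : a₁₂₂ ≥ (a₁₁₁ * a₂₂₂^2) ^ ((1:ℝ)/3))
    (c2 : a₁₃₃ ≥ (a₁₁₁ * a₃₃₃^2) ^ ((1:ℝ)/3))
    (c3 : a₁₁₂ ≥ -((a₁₁₁^2 * a₂₂₂) ^ ((1:ℝ)/3)))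
    (c4 : a₁₁₃ ≥ -((a₁₁₁^2 * a₃₃₃) ^ ((1:ℝ)/3)))
    (c5 : a₂₂₃ ≥ -((a₂₂₂^2 * a₃₃₃) ^ ((1:ℝ)/3)))
    (c6 : a₂₃₃ ≥ (a₂₂₂ * a₃₃₃^2) ^ ((1:ℝ)/3))
    (c7 : a₁₂₃ ≥ (a₁₁₁ * a₂₂₂ * a₃₃₃) ^ ((1:ℝ)/3)) :
    ∀ x₁ x₂ x₃ : ℝ, 0 ≤ x₁ → 0 ≤ x₂ → 0 ≤ x₃ → (x₁, x₂, x₃) ≠ (0, 0, 0) →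
      0 < a₁₁₁*x₁^3 + a₂₂₂*x₂^3 + a₃₃₃*x₃^3 + 3*a₁₁₂*x₁^2*x₂ + 3*a₁₂₂*x₁*x₂^2
          + 3*a₁₁₃*x₁^2*x₃ + 3*a₁₃₃*x₁*x₃^2 + 3*a₂₂₃*x₂^2*x₃ + 3*a₂₃₃*x₂*x₃^2
          + 6*a₁₂₃*x₁*x₂*x₃ := by
  intro x₁ x₂ x₃ hx1 hx2 hx3 hne
  set α := a₁₁₁ ^ ((1:ℝ)/3) with hαdef
  set β := a₂₂₂ ^ ((1:ℝ)/3) with hβdef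
  set γ := a₃₃₃ ^ ((1:ℝ)/3) with hγdef
  have hα : 0 < α := Real.rpow_pos_of_pos h1 _
  have hβ : 0 < β := Real.rpow_pos_of_pos h2 _
  have hγ : 0 < γ := Real.rpow_pos_of_pos h3 _
  have hα3 : α ^ 3 = a₁₁₁ := by
    rw [hαdef, one_div, show ((3:ℝ))⁻¹ = ((3:ℕ):ℝ)⁻¹ by norm_num,
      Real.rpow_inv_natCast_pow h1.le (by norm_num)]
  have hβ3 : β ^ 3 = a₂₂₂ := by
    rw [hβdef, one_div, show ((3:ℝ))⁻¹ = ((3:ℕ):ℝ)⁻¹ by norm_num,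
      Real.rpow_inv_natCast_pow h2.le (by norm_num)]
  have hγ3 : γ ^ 3 = a₃₃₃ := by
    rw [hγdef, one_div, show ((3:ℝ))⁻¹ = ((3:ℕ):ℝ)⁻¹ by norm_num,
      Real.rpow_inv_natCast_pow h3.le (by norm_num)]
  have c1' : a₁₂₂ ≥ α * β^2 := by
    rwa [Real.mul_rpow h1.le (sq_nonneg _), rt_sq a₂₂₂ h2.le] at c1
  have c2' : a₁₃₃ ≥ α * γ^2 := by
    rwa [Real.mul_rpow h1.le (sq_nonneg _), rt_sq a₃₃₃ h3.le] at c2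
  have c3' : a₁₁₂ ≥ -(α^2 * β) := by
    rwa [Real.mul_rpow (sq_nonneg _) h2.le, rt_sq a₁₁₁ h1.le] at c3
  have c4' : a₁₁₃ ≥ -(α^2 * γ) := by
    rwa [Real.mul_rpow (sq_nonneg _) h3.le, rt_sq a₁₁₁ h1.le] at c4
  have c5' : a₂₂₃ ≥ -(β^2 * γ) := by
    rwa [Real.mul_rpow (sq_nonneg _) h3.le, rt_sq a₂₂₂ h2.le] at c5
  have c6' : a₂₃₃ ≥ β * γ^2 := by
    rwa [Real.mul_rpow h2.le (sq_nonneg _), rt_sq a₃₃₃ h3.le] at c6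
  have c7' : a₁₂₃ ≥ α * β * γ := by
    rwa [Real.mul_rpow (mul_nonneg h1.le h2.le) h3.le,
      Real.mul_rpow h1.le h2.le] at c7
  have hpos : 0 < x₁ ∨ 0 < x₂ ∨ 0 < x₃ := by
    by_contra hcon
    push_neg at hcon
    exact hne (by
      have e1 : x₁ = 0 := le_antisymm hcon.1 hx1
      have e2 : x₂ = 0 := le_antisymm hcon.2.1 hx2
      have e3 : x₃ = 0 := le_antisymm hcon.2.2 hx3
      simp [e1, e2, e3])
  have hE := key (α*x₁) (β*x₂) (γ*x₃) (mul_nonneg hα.le hx1)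
    (mul_nonneg hβ.le hx2) (mul_nonneg hγ.le hx3) (by
      rcases hpos with h | h | h
      · exact Or.inl (mul_pos hα h)
      · exact Or.inr (Or.inl (mul_pos hβ h))
      · exact Or.inr (Or.inr (mul_pos hγ h)))
  rw [← hα3, ← hβ3, ← hγ3]
  nlinarith [hE,
    mul_nonneg (sub_nonneg.2 c1') (mul_nonneg hx1 (mul_nonneg hx2 hx2)),
    mul_nonneg (sub_nonneg.2 c2') (mul_nonneg hx1 (mul_nonneg hx3 hx3)),
    mul_nonneg (by linarith : (0:ℝ) ≤ a₁₁₂ + α^2*β) (mul_nonneg (mul_nonneg hx1 hx1) hx2),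
    mul_nonneg (by linarith : (0:ℝ) ≤ a₁₁₃ + α^2*γ) (mul_nonneg (mul_nonneg hx1 hx1) hx3),
    mul_nonneg (by linarith : (0:ℝ) ≤ a₂₂₃ + β^2*γ) (mul_nonneg (mul_nonneg hx2 hx2) hx3),
    mul_nonneg (sub_nonneg.2 c6') (mul_nonneg hx2 (mul_nonneg hx3 hx3)),
    mul_nonneg (sub_nonneg.2 c7') (mul_nonneg hx1 (mul_nonneg hx2 hx3))]
end

section
/- Let A = (a_ijk) ∈ S₃,₃ with positive diagonal entries and a₁₂₃ ≥ 0. Suppose a₁₂₂ ≥ (a₁₁₁a₂₂₂²)^(1/3), a₁₃₃ ≥ (a₁₁₁a₃₃₃²)^(1/3), a₁₁₂ ≥ 0, a₁₁₃ ≥ -(a₁₁₁²a₃₃₃)^(1/3), a₂₂₃ ≥ 0, a₂₃₃ ≥ 0. Then A is strictly copositive. -/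
/-!
Write `α³ = a₁₁₁`, `γ³ = a₃₃₃`. The only coefficient that may be negative is `a₁₁₃ ≥ -α²γ`;
together with `a₁₃₃ ≥ αγ²` it is absorbed by the binary cubic `u³ - 3u²v + 3uv² + v³` in
`u = αx₁`, `v = γx₃`, which is at least `(u³ + v³) / 4`. Every other off-diagonal term is
nonnegative, so the form dominates a quarter of its diagonal part `a₁₁₁x₁³ + a₂₂₂x₂³ + a₃₃₃x₃³`.
-/

lemma Real.rpow_one_div_three_pow_three {a : ℝ} (ha : 0 ≤ a) : (a ^ ((1 : ℝ) / 3)) ^ 3 = a := by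
  rw [one_div]
  exact_mod_cast Real.rpow_inv_natCast_pow ha three_ne_zero

lemma Real.mul_sq_rpow_one_div_three {a b : ℝ} (ha : 0 ≤ a) (hb : 0 ≤ b) :
    (a * b ^ 2) ^ ((1 : ℝ) / 3) = a ^ ((1 : ℝ) / 3) * (b ^ ((1 : ℝ) / 3)) ^ 2 := by
  rw [Real.mul_rpow ha (by positivity), Real.rpow_pow_comm hb]

lemma cube_add_cube_le_four_mul {u v : ℝ} (hu : 0 ≤ u) (hv : 0 ≤ v) :
    u ^ 3 + v ^ 3 ≤ 4 * (u ^ 3 - 3 * u ^ 2 * v + 3 * u * v ^ 2 + v ^ 3) := by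
  linear_combination 3 * mul_nonneg hu (sq_nonneg (u - 2 * v)) + 3 * pow_nonneg hv 3

lemma diagonal_cubic_pos {a b c x y z : ℝ} (ha : 0 < a) (hb : 0 < b) (hc : 0 < c)
    (hx : 0 ≤ x) (hy : 0 ≤ y) (hz : 0 ≤ z) (hxyz : (x, y, z) ≠ (0, 0, 0)) :
    0 < a * x ^ 3 + b * y ^ 3 + c * z ^ 3 := by
  have hx' : 0 ≤ a * x ^ 3 := by positivity
  have hy' : 0 ≤ b * y ^ 3 := by positivity
  have hz' : 0 ≤ c * z ^ 3 := by positivity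
  rcases hx.lt_or_eq with hx | rfl
  · linarith [mul_pos ha (pow_pos hx 3)]
  rcases hy.lt_or_eq with hy | rfl
  · linarith [mul_pos hb (pow_pos hy 3)]
  rcases hz.lt_or_eq with hz | rfl
  · linarith [mul_pos hc (pow_pos hz 3)]
  exact absurd rfl hxyz

lemma quarter_diagonal_le_cubic_form {α γ a₂₂₂ a₁₁₂ a₁₂₂ a₁₁₃ a₁₃₃ a₂₂₃ a₂₃₃ a₁₂₃ x₁ x₂ x₃ : ℝ}
    (hα : 0 ≤ α) (hγ : 0 ≤ γ) (h2 : 0 ≤ a₂₂₂) (h123 : 0 ≤ a₁₂₃)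
    (c1 : 0 ≤ a₁₂₂) (c2 : α * γ ^ 2 ≤ a₁₃₃) (c3 : 0 ≤ a₁₁₂) (c4 : -(α ^ 2 * γ) ≤ a₁₁₃)
    (c5 : 0 ≤ a₂₂₃) (c6 : 0 ≤ a₂₃₃) (hx₁ : 0 ≤ x₁) (hx₂ : 0 ≤ x₂) (hx₃ : 0 ≤ x₃) :
    (α ^ 3 * x₁ ^ 3 + a₂₂₂ * x₂ ^ 3 + γ ^ 3 * x₃ ^ 3) / 4 ≤
      α ^ 3 * x₁ ^ 3 + a₂₂₂ * x₂ ^ 3 + γ ^ 3 * x₃ ^ 3 + 3 * a₁₁₂ * x₁ ^ 2 * x₂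
        + 3 * a₁₂₂ * x₁ * x₂ ^ 2 + 3 * a₁₁₃ * x₁ ^ 2 * x₃ + 3 * a₁₃₃ * x₁ * x₃ ^ 2
        + 3 * a₂₂₃ * x₂ ^ 2 * x₃ + 3 * a₂₃₃ * x₂ * x₃ ^ 2 + 6 * a₁₂₃ * x₁ * x₂ * x₃ := by
  have binary := cube_add_cube_le_four_mul (mul_nonneg hα hx₁) (mul_nonneg hγ hx₃)
  linear_combination binary / 4 + 3 / 4 * mul_nonneg h2 (pow_nonneg hx₂ 3)
    + 3 * mul_le_mul_of_nonneg_right c4 (mul_nonneg (sq_nonneg x₁) hx₃)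
    + 3 * mul_le_mul_of_nonneg_right c2 (mul_nonneg hx₁ (sq_nonneg x₃))
    + 3 * mul_nonneg c3 (mul_nonneg (sq_nonneg x₁) hx₂)
    + 3 * mul_nonneg c1 (mul_nonneg hx₁ (sq_nonneg x₂))
    + 3 * mul_nonneg c5 (mul_nonneg (sq_nonneg x₂) hx₃)
    + 3 * mul_nonneg c6 (mul_nonneg hx₂ (sq_nonneg x₃))
    + 6 * mul_nonneg h123 (mul_nonneg (mul_nonneg hx₁ hx₂) hx₃)

theorem stmt_18 (a₁₁₁ a₂₂₂ a₃₃₃ a₁₁₂ a₁₂₂ a₁₁₃ a₁₃₃ a₂₂₃ a₂₃₃ a₁₂₃ : ℝ)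
    (h1 : 0 < a₁₁₁) (h2 : 0 < a₂₂₂) (h3 : 0 < a₃₃₃)
    (h123 : a₁₂₃ ≥ 0)
    (c1 : a₁₂₂ ≥ (a₁₁₁ * a₂₂₂^2) ^ ((1:ℝ)/3))
    (c2 : a₁₃₃ ≥ (a₁₁₁ * a₃₃₃^2) ^ ((1:ℝ)/3))
    (c3 : a₁₁₂ ≥ 0)
    (c4 : a₁₁₃ ≥ -((a₁₁₁^2 * a₃₃₃) ^ ((1:ℝ)/3)))
    (c5 : a₂₂₃ ≥ 0) (c6 : a₂₃₃ ≥ 0) :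
    ∀ x₁ x₂ x₃ : ℝ, 0 ≤ x₁ → 0 ≤ x₂ → 0 ≤ x₃ → (x₁, x₂, x₃) ≠ (0, 0, 0) →
      0 < a₁₁₁*x₁^3 + a₂₂₂*x₂^3 + a₃₃₃*x₃^3 + 3*a₁₁₂*x₁^2*x₂ + 3*a₁₂₂*x₁*x₂^2
          + 3*a₁₁₃*x₁^2*x₃ + 3*a₁₃₃*x₁*x₃^2 + 3*a₂₂₃*x₂^2*x₃ + 3*a₂₃₃*x₂*x₃^2
          + 6*a₁₂₃*x₁*x₂*x₃ := by
  intro x₁ x₂ x₃ hx₁ hx₂ hx₃ hx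
  have hα := Real.rpow_one_div_three_pow_three h1.le
  have hγ := Real.rpow_one_div_three_pow_three h3.le
  rw [Real.mul_sq_rpow_one_div_three h1.le h2.le] at c1
  rw [Real.mul_sq_rpow_one_div_three h1.le h3.le] at c2
  rw [mul_comm, Real.mul_sq_rpow_one_div_three h3.le h1.le, mul_comm] at c4
  have bound := quarter_diagonal_le_cubic_form (by positivity) (by positivity) h2.le h123
    (le_trans (by positivity) c1) c2 c3 c4 c5 c6 hx₁ hx₂ hx₃
  rw [hα, hγ] at bound
  linarith [diagonal_cubic_pos h1 h2 h3 hx₁ hx₂ hx₃ hx]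
end
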